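/- Let L be a real n×m₁ matrix, N a real m₂×d matrix, A a real n×d matrix, k ≥ 1 an integer, T₁ a real t₁×n matrix, T₂ a real d×t₂ matrix, and c₁, c₁' ≥ 0, c₂, c₂' > 0, c ≥ 1 real numbers. Let X* be an m₁×m₂ matrix of rank at most k with ‖LX*N − A‖₁ ≤ ‖LXN − A‖₁ for all rank ≤ k matrices X, and let X̃ be an m₁×m₂ matrix of rank at most k with ‖T₁(LX̃N − A)‖₁ ≤ ‖T₁(LXN − A)‖₁ for all rank ≤ k matrices X. Suppose: (a) ‖T₁(LX*N − A)‖₁ ≤ c₁ · ‖LX*N − A‖₁; (b) ‖T₁Lx‖₁ ≥ (1/c₂) · ‖Lx‖₁ for all x ∈ ℝ^{m₁}; (c) ‖(T₁(LX̃N − A))T₂‖₁ ≤ c₁' · ‖T₁(LX̃N − A)‖₁; (d) ‖T₂ᵀNᵀx‖₁ ≥ (1/c₂') · ‖Nᵀx‖₁ for all x ∈ ℝ^{m₂}. Then any m₁×m₂ matrix X̂ of rank at most k satisfying ‖T₁(LX̂N − A)T₂‖₁ ≤ c · ‖T₁(LXN − A)T₂‖₁ for all rank ≤ k matrices X also satisfies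 ‖LX̂N − A‖₁ ≤ c · (2c₁c₂ + 1)(2c₁'c₂' + 1) · ‖LX*N − A‖₁. -/
import Mathlib


open Matrix

/-- The entrywise `ℓ₁` norm of a matrix. -/
noncomputable def l1M {n d : ℕ} (M : Matrix (Fin n) (Fin d) ℝ) : ℝ :=
  ∑ i, ∑ j, |M i j|

/-- The `ℓ₁` norm of a vector. -/
noncomputable def l1V {n : ℕ} (v : Fin n → ℝ) : ℝ :=
  ∑ i, |v i|

lemma l1M_nonneg {n d : ℕ} (M : Matrix (Fin n) (Fin d) ℝ) : 0 ≤ l1M M :=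
  Finset.sum_nonneg fun _ _ => Finset.sum_nonneg fun _ _ => abs_nonneg _

lemma l1M_sub_le {n d : ℕ} (P Q R : Matrix (Fin n) (Fin d) ℝ) :
    l1M (P - Q) ≤ l1M (P - R) + l1M (R - Q) := by
  unfold l1M
  rw [← Finset.sum_add_distrib]
  refine Finset.sum_le_sum fun i _ => ?_
  rw [← Finset.sum_add_distrib]
  refine Finset.sum_le_sum fun j _ => ?_
  simpa [Matrix.sub_apply] using abs_sub_le (P i j) (R i j) (Q i j)

lemma l1M_sub_le' {n d : ℕ} (P Q : Matrix (Fin n) (Fin d) ℝ) :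
    l1M (P - Q) ≤ l1M P + l1M Q := by
  unfold l1M
  rw [← Finset.sum_add_distrib]
  refine Finset.sum_le_sum fun i _ => ?_
  rw [← Finset.sum_add_distrib]
  refine Finset.sum_le_sum fun j _ => ?_
  simpa [Matrix.sub_apply] using abs_sub (P i j) (Q i j)

lemma contract_cols {n d t₁ m₁ : ℕ} {c₂ : ℝ} (hc₂ : 0 < c₂)
    (L : Matrix (Fin n) (Fin m₁) ℝ) (T₁ : Matrix (Fin t₁) (Fin n) ℝ)
    (hb : ∀ x : Fin m₁ → ℝ, (1 / c₂) * l1V (L.mulVec x) ≤ l1V (T₁.mulVec (L.mulVec x)))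
    (Y : Matrix (Fin m₁) (Fin d) ℝ) :
    l1M (L * Y) ≤ c₂ * l1M (T₁ * (L * Y)) := by
  have h3 : (1 / c₂) * l1M (L * Y) ≤ l1M (T₁ * (L * Y)) := by
    have h1 : l1M (L * Y) = ∑ j, l1V (fun i => (L * Y) i j) := by
      unfold l1M l1V; rw [Finset.sum_comm]
    have h2 : l1M (T₁ * (L * Y)) = ∑ j, l1V (fun i => (T₁ * (L * Y)) i j) := by
      unfold l1M l1V; rw [Finset.sum_comm]
    rw [h1, h2, Finset.mul_sum]
    refine Finset.sum_le_sum fun j _ => ?_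
    have e1 : (fun i => (L * Y) i j) = L.mulVec (fun kk => Y kk j) := by
      funext i; simp [Matrix.mul_apply, Matrix.mulVec, dotProduct]
    have e2 : (fun i => (T₁ * (L * Y)) i j) = T₁.mulVec (fun kk => (L * Y) kk j) := by
      funext i; simp [Matrix.mul_apply, Matrix.mulVec, dotProduct]
    rw [e1, e2, e1]
    exact hb _
  calc l1M (L * Y) = c₂ * ((1 / c₂) * l1M (L * Y)) := by field_simp
    _ ≤ c₂ * l1M (T₁ * (L * Y)) := mul_le_mul_of_nonneg_left h3 hc₂.le

lemma contract_rows {d t₁ t₂ m₂ : ℕ} {c₂' : ℝ} (hc₂' : 0 < c₂')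
    (N : Matrix (Fin m₂) (Fin d) ℝ) (T₂ : Matrix (Fin d) (Fin t₂) ℝ)
    (hdd : ∀ x : Fin m₂ → ℝ, (1 / c₂') * l1V (Nᵀ.mulVec x) ≤ l1V (T₂ᵀ.mulVec (Nᵀ.mulVec x)))
    (M : Matrix (Fin t₁) (Fin m₂) ℝ) :
    l1M (M * N) ≤ c₂' * l1M (M * N * T₂) := by
  have h3 : (1 / c₂') * l1M (M * N) ≤ l1M (M * N * T₂) := by
    have h1 : l1M (M * N) = ∑ i, l1V (fun j => (M * N) i j) := rfl
    have h2 : l1M (M * N * T₂) = ∑ i, l1V (fun j => (M * N * T₂) i j) := rfl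
    rw [h1, h2, Finset.mul_sum]
    refine Finset.sum_le_sum fun i _ => ?_
    have e1 : (fun j => (M * N) i j) = Nᵀ.mulVec (fun kk => M i kk) := by
      funext j; simp [Matrix.mul_apply, Matrix.mulVec, dotProduct, Matrix.transpose_apply,
        mul_comm]
    have e2 : (fun j => (M * N * T₂) i j) = T₂ᵀ.mulVec (fun kk => (M * N) i kk) := by
      funext j; simp [Matrix.mul_apply, Matrix.mulVec, dotProduct, Matrix.transpose_apply,
        mul_comm]
    rw [e1, e2, e1]
    exact hdd _
  calc l1M (M * N) = c₂' * ((1 / c₂') * l1M (M * N)) := by field_simp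
    _ ≤ c₂' * l1M (M * N * T₂) := mul_le_mul_of_nonneg_left h3 hc₂'.le


set_option maxHeartbeats 1000000 in
/-- Two-sided sketching: if `T₁` has at most `c₁`-dilation on `LX*N − A` and at most
`c₂`-contraction on `L`, and `T₂ᵀ` has at most `c₁'`-dilation on `(T₁(LX̃N − A))ᵀ` and at most
`c₂'`-contraction on `Nᵀ`, then any rank-`k` matrix `X̂` that is a `c`-approximate minimizer of
the doubly sketched problem satisfies
`‖LX̂N − A‖₁ ≤ c(2c₁c₂ + 1)(2c₁'c₂' + 1)‖LX*N − A‖₁`. -/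
theorem two_sided_sketch_cost_preserving {n d m₁ m₂ t₁ t₂ k : ℕ} (hk : 1 ≤ k)
    (L : Matrix (Fin n) (Fin m₁) ℝ) (N : Matrix (Fin m₂) (Fin d) ℝ)
    (A : Matrix (Fin n) (Fin d) ℝ)
    (T₁ : Matrix (Fin t₁) (Fin n) ℝ) (T₂ : Matrix (Fin d) (Fin t₂) ℝ)
    (c₁ c₁' c₂ c₂' c : ℝ)
    (hc₁ : 0 ≤ c₁) (hc₁' : 0 ≤ c₁') (hc₂ : 0 < c₂) (hc₂' : 0 < c₂') (hc : 1 ≤ c)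
    (Xstar : Matrix (Fin m₁) (Fin m₂) ℝ) (hXstar_rank : Xstar.rank ≤ k)
    (hXstar : ∀ X : Matrix (Fin m₁) (Fin m₂) ℝ, X.rank ≤ k →
      l1M (L * Xstar * N - A) ≤ l1M (L * X * N - A))
    (Xtil : Matrix (Fin m₁) (Fin m₂) ℝ) (hXtil_rank : Xtil.rank ≤ k)
    (hXtil : ∀ X : Matrix (Fin m₁) (Fin m₂) ℝ, X.rank ≤ k →
      l1M (T₁ * (L * Xtil * N - A)) ≤ l1M (T₁ * (L * X * N - A)))
    (ha : l1M (T₁ * (L * Xstar * N - A)) ≤ c₁ * l1M (L * Xstar * N - A))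
    (hb : ∀ x : Fin m₁ → ℝ, (1 / c₂) * l1V (L.mulVec x) ≤ l1V (T₁.mulVec (L.mulVec x)))
    (hcc : l1M ((T₁ * (L * Xtil * N - A)) * T₂) ≤ c₁' * l1M (T₁ * (L * Xtil * N - A)))
    (hdd : ∀ x : Fin m₂ → ℝ, (1 / c₂') * l1V (Nᵀ.mulVec x) ≤ l1V (T₂ᵀ.mulVec (Nᵀ.mulVec x)))
    (Xhat : Matrix (Fin m₁) (Fin m₂) ℝ) (hXhat_rank : Xhat.rank ≤ k)
    (hXhat : ∀ X : Matrix (Fin m₁) (Fin m₂) ℝ, X.rank ≤ k →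
      l1M (T₁ * (L * Xhat * N - A) * T₂) ≤ c * l1M (T₁ * (L * X * N - A) * T₂)) :
    l1M (L * Xhat * N - A) ≤
      c * (2 * c₁ * c₂ + 1) * (2 * c₁' * c₂' + 1) * l1M (L * Xstar * N - A) := by
  -- abbreviate the six scalar quantities
  set s := l1M (L * Xstar * N - A) with hs
  set gh := l1M (T₁ * (L * Xhat * N - A)) with hgh
  set gt := l1M (T₁ * (L * Xtil * N - A)) with hgt
  set gs := l1M (T₁ * (L * Xstar * N - A)) with hgs
  set Hh := l1M (T₁ * (L * Xhat * N - A) * T₂) with hHh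
  set Ht := l1M (T₁ * (L * Xtil * N - A) * T₂) with hHt
  have s0 : 0 ≤ s := l1M_nonneg _
  have gt0 : 0 ≤ gt := l1M_nonneg _
  have Ht0 : 0 ≤ Ht := l1M_nonneg _
  have gh0 : 0 ≤ gh := l1M_nonneg _
  have gs0 : 0 ≤ gs := l1M_nonneg _
  have hgt_s : gt ≤ c₁ * s := le_trans (hXtil Xstar hXstar_rank) ha
  have hgs_s : gs ≤ c₁ * s := ha
  have hHh_c : Hh ≤ c * Ht := hXhat Xtil hXtil_rank
  have hHt_gt : Ht ≤ c₁' * gt := hcc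
  -- Step A : gh ≤ gt + c₂' * (c + 1) * Ht
  have hF : ∀ X : Matrix (Fin m₁) (Fin m₂) ℝ,
      T₁ * (L * X * N - A) = T₁ * (L * X * N) - T₁ * A := fun X => Matrix.mul_sub _ _ _
  have step1 : gh ≤ l1M (T₁ * (L * Xhat * N) - T₁ * (L * Xtil * N)) + gt := by
    rw [hgh, hgt, hF Xhat, hF Xtil]
    exact l1M_sub_le _ _ _
  have hmid : T₁ * (L * Xhat * N) - T₁ * (L * Xtil * N) = (T₁ * (L * (Xhat - Xtil))) * N := by
    simp [Matrix.mul_sub, Matrix.sub_mul, Matrix.mul_assoc]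
  have step2 : l1M ((T₁ * (L * (Xhat - Xtil))) * N) ≤
      c₂' * l1M ((T₁ * (L * (Xhat - Xtil))) * N * T₂) :=
    contract_rows hc₂' N T₂ hdd _
  have hmid2 : (T₁ * (L * (Xhat - Xtil))) * N * T₂ =
      T₁ * (L * Xhat * N - A) * T₂ - T₁ * (L * Xtil * N - A) * T₂ := by
    simp [Matrix.mul_sub, Matrix.sub_mul, Matrix.mul_assoc]
  have step3 : l1M ((T₁ * (L * (Xhat - Xtil))) * N * T₂) ≤ Hh + Ht := by
    rw [hmid2]; exact l1M_sub_le' _ _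
  have stepA : gh ≤ gt + c₂' * (Hh + Ht) := by
    have h2 : l1M ((T₁ * (L * (Xhat - Xtil))) * N) ≤ c₂' * (Hh + Ht) :=
      le_trans step2 (mul_le_mul_of_nonneg_left step3 hc₂'.le)
    have := step1
    rw [hmid] at this
    linarith
  -- Step B : cost ≤ s + c₂ * (gh + gs)
  have stepB1 : l1M (L * Xhat * N - A) ≤ l1M (L * Xhat * N - L * Xstar * N) + s := by
    rw [hs]
    exact l1M_sub_le _ _ _
  have hmid3 : L * Xhat * N - L * Xstar * N = L * ((Xhat - Xstar) * N) := by
    simp [Matrix.mul_sub, Matrix.sub_mul, Matrix.mul_assoc]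
  have stepB2 : l1M (L * ((Xhat - Xstar) * N)) ≤
      c₂ * l1M (T₁ * (L * ((Xhat - Xstar) * N))) :=
    contract_cols hc₂ L T₁ hb _
  have hmid4 : T₁ * (L * ((Xhat - Xstar) * N)) =
      T₁ * (L * Xhat * N - A) - T₁ * (L * Xstar * N - A) := by
    simp [Matrix.mul_sub, Matrix.sub_mul, Matrix.mul_assoc]
  have stepB3 : l1M (T₁ * (L * ((Xhat - Xstar) * N))) ≤ gh + gs := by
    rw [hmid4]; exact l1M_sub_le' _ _
  have stepB : l1M (L * Xhat * N - A) ≤ s + c₂ * (gh + gs) := by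
    have h2 : l1M (L * ((Xhat - Xstar) * N)) ≤ c₂ * (gh + gs) :=
      le_trans stepB2 (mul_le_mul_of_nonneg_left stepB3 hc₂.le)
    rw [hmid3] at stepB1
    linarith
  -- combine
  have hgh_bound : gh ≤ (1 + (c + 1) * c₁' * c₂') * (c₁ * s) := by
    have h1 : Hh + Ht ≤ (c + 1) * Ht := by nlinarith
    have h2 : c₂' * (Hh + Ht) ≤ c₂' * ((c + 1) * (c₁' * gt)) := by
      refine mul_le_mul_of_nonneg_left (le_trans h1 ?_) hc₂'.le
      exact mul_le_mul_of_nonneg_left hHt_gt (by linarith)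
    have h3 : gh ≤ (1 + (c + 1) * c₁' * c₂') * gt := by nlinarith [stepA, h2]
    refine le_trans h3 (mul_le_mul_of_nonneg_left hgt_s ?_)
    have := mul_nonneg (by linarith : (0:ℝ) ≤ c + 1) (mul_nonneg hc₁' hc₂'.le)
    nlinarith [this]
  have hcoef : 1 + c₂ * ((1 + (c + 1) * c₁' * c₂') * c₁ + c₁) ≤
      c * (2 * c₁ * c₂ + 1) * (2 * c₁' * c₂' + 1) := by
    nlinarith [mul_nonneg (mul_nonneg hc₁ hc₂.le) (sub_nonneg.2 hc),
      mul_nonneg (mul_nonneg (mul_nonneg hc₁ hc₂.le) (mul_nonneg hc₁' hc₂'.le))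
        (by linarith : (0:ℝ) ≤ 3 * c - 1),
      mul_nonneg (mul_nonneg hc₁' hc₂'.le) (by linarith : (0:ℝ) ≤ c)]
  have hfinal : s + c₂ * (gh + gs) ≤
      c * (2 * c₁ * c₂ + 1) * (2 * c₁' * c₂' + 1) * s := by
    have h1 : gh + gs ≤ (1 + (c + 1) * c₁' * c₂') * (c₁ * s) + c₁ * s := by linarith
    have h2 : c₂ * (gh + gs) ≤ c₂ * ((1 + (c + 1) * c₁' * c₂') * (c₁ * s) + c₁ * s) :=
      mul_le_mul_of_nonneg_left h1 hc₂.le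
    nlinarith [mul_le_mul_of_nonneg_right hcoef s0]
  linarith
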